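/- arXiv:1808.00245 — 3 statements merged into one kernel-verified Lean document; each statement's English description precedes it below -/
import Mathlib

section
/- Let X, A be finite sets, q(·|x,a) a transition kernel, and define for a stationary randomized strategy g the matrix P(g)(x,y) = ∑_{a} q(y|x,a) g(a|x). Suppose the uniform strategy ḡ(a|x) = 1/|A| yields an irreducible chain P(ḡ), with constants n, δ such that ∑_{j=1}^n P^j(ḡ)(x,y) ≥ δ for all x,y. Let (x_t, a_t) be a process adapted to a filtration (ℱ_t) with P(x_{t+1} = y | ℱ_t) = q(y|x_t, a_t) and P(a_t = a | ℱ_{t-1}, x_t) = π_t(a) where π_t(a) ≥ c > 0. Then for every f : X → [0,∞) and every t, ∑_{j=1}^n E[f(x_{t+j+1}) | ℱ_t] ≥ cⁿ |A|ⁿ δ ∑_{y∈X} f(y) almost surely. -/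
/-!
Conditioning on `ℱ (t + 1)` and then on `ℱ t ⊔ σ(x (t + 1))`, one transition followed by one
action choice has conditional law `∑ b, π (t + 1) b · q(· | x (t + 1), b)`, which dominates
`c ∑ b q(· | x (t + 1), b) = c |A| P(ḡ)(x (t + 1), ·)`. Iterating with the tower property gives
`E[f (x (t + 1 + j)) | ℱ t ⊔ σ(x (t + 1))] ≥ ((c |A|) ^ j • P(ḡ) ^ j *ᵥ f) (x (t + 1))`.
Since the exploration probabilities sum to one, `c |A| ≤ 1`, so every power `(c |A|) ^ j` with
`j ≤ n` is at least `(c |A|) ^ n`, and summing over `j ∈ [1, n]` the irreducibility bound applies.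
-/

open MeasureTheory Filter Matrix

theorem integrable_comp_of_finite {Ω Y : Type*} {m0 : MeasurableSpace Ω} {μ : Measure Ω}
    [IsFiniteMeasure μ] [Finite Y] [MeasurableSpace Y] [MeasurableSingletonClass Y]
    {ξ : Ω → Y} (hξ : Measurable ξ) (F : Y → ℝ) : Integrable (fun ω => F (ξ ω)) μ :=
  Integrable.of_finite.comp_measurable hξ

theorem condExp_comp_eq_sum_mul {Ω Y Z : Type*} {m m0 : MeasurableSpace Ω} {μ : Measure Ω}
    [IsFiniteMeasure μ] [Fintype Y] [DecidableEq Y] [MeasurableSpace Y]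
    [MeasurableSingletonClass Y] [Finite Z] [MeasurableSpace Z] [MeasurableSingletonClass Z]
    {ξ : Ω → Y} {ζ : Ω → Z} (hm : m ≤ m0) (hξ : Measurable ξ) (hζ : Measurable[m] ζ)
    {p : Y → Ω → ℝ} (hp : ∀ y, μ[fun ω => if ξ ω = y then 1 else 0 | m] =ᵐ[μ] p y)
    (h : Z → Y → ℝ) :
    μ[fun ω => h (ζ ω) (ξ ω) | m] =ᵐ[μ] fun ω => ∑ y, h (ζ ω) y * p y ω := by
  have hsplit : (fun ω => h (ζ ω) (ξ ω))
      = ∑ y, (fun ω => h (ζ ω) y) * fun ω => if ξ ω = y then 1 else 0 := by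
    ext ω
    simp
  have hint : ∀ y,
      Integrable ((fun ω => h (ζ ω) y) * fun ω => if ξ ω = y then 1 else 0) μ := fun y =>
    integrable_comp_of_finite ((hζ.mono hm le_rfl).prodMk hξ)
      fun w => h w.1 y * if w.2 = y then 1 else 0
  have hterm : ∀ y, μ[(fun ω => h (ζ ω) y) * fun ω => if ξ ω = y then 1 else 0 | m]
      =ᵐ[μ] fun ω => h (ζ ω) y * p y ω := fun y =>
    (condExp_mul_of_stronglyMeasurable_left
      ((measurable_of_finite (h · y)).comp hζ).stronglyMeasurable (hint y)
      (integrable_comp_of_finite hξ fun z => if z = y then 1 else 0)).trans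
      ((hp y).mono fun ω hω => by simp [hω])
  rw [hsplit]
  filter_upwards [condExp_finsetSum (fun y _ => hint y) m, ae_all_iff.2 hterm]
    with ω hsum hω
  rw [hsum, Finset.sum_apply]
  exact Finset.sum_congr rfl fun y _ => hω y

theorem condExp_mono_of_le_condExp {Ω : Type*} {m₁ m₂ m0 : MeasurableSpace Ω}
    {μ : Measure Ω} [IsFiniteMeasure μ] {g F : Ω → ℝ} (h₁₂ : m₁ ≤ m₂) (h₂ : m₂ ≤ m0)
    (hg : Integrable g μ) (hgF : g ≤ᵐ[μ] μ[F | m₂]) : μ[g | m₁] ≤ᵐ[μ] μ[F | m₁] :=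
  (condExp_mono hg integrable_condExp hgF).trans (condExp_condExp_of_le h₁₂ h₂).le

theorem Matrix.mulVec_nonneg {m n R : Type*} [Fintype n] [Semiring R] [PartialOrder R]
    [IsOrderedRing R] {M : Matrix m n R} (hM : ∀ i j, 0 ≤ M i j) {v : n → R} (hv : 0 ≤ v) :
    0 ≤ M *ᵥ v := fun i =>
  Finset.sum_nonneg fun j _ => mul_nonneg (hM i j) (hv j)

theorem Matrix.pow_mulVec_nonneg {n R : Type*} [Fintype n] [DecidableEq n] [Semiring R]
    [PartialOrder R] [IsOrderedRing R] {M : Matrix n n R} (hM : ∀ i j, 0 ≤ M i j) {v : n → R}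
    (hv : 0 ≤ v) (k : ℕ) : 0 ≤ M ^ k *ᵥ v := by
  induction k with
  | zero => simpa using hv
  | succ k ih => rw [pow_succ', ← mulVec_mulVec]; exact mulVec_nonneg hM ih

theorem pow_mul_mul_sum_le_sum_smul_pow_mulVec {X : Type*} [Fintype X] [DecidableEq X]
    {P : Matrix X X ℝ} (hP : ∀ i j, 0 ≤ P i j) {n : ℕ} {δ : ℝ}
    (hδ : ∀ i k, δ ≤ ∑ j ∈ Finset.Icc 1 n, (P ^ j) i k) {r : ℝ} (hr₀ : 0 ≤ r)
    (hr₁ : r ≤ 1) {f : X → ℝ} (hf : 0 ≤ f) (z : X) :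
    r ^ n * δ * ∑ y, f y ≤ ∑ j ∈ Finset.Icc 1 n, ((r • P) ^ j *ᵥ f) z := by
  have hδf : δ * ∑ y, f y ≤ ∑ j ∈ Finset.Icc 1 n, (P ^ j *ᵥ f) z := calc
    δ * ∑ y, f y ≤ ∑ y, (∑ j ∈ Finset.Icc 1 n, (P ^ j) z y) * f y := by
      rw [Finset.mul_sum]
      exact Finset.sum_le_sum fun y _ => mul_le_mul_of_nonneg_right (hδ z y) (hf y)
    _ = ∑ j ∈ Finset.Icc 1 n, (P ^ j *ᵥ f) z := by
      simp only [Finset.sum_mul, mulVec, dotProduct]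
      exact Finset.sum_comm
  calc r ^ n * δ * ∑ y, f y ≤ r ^ n * ∑ j ∈ Finset.Icc 1 n, (P ^ j *ᵥ f) z := by
        rw [mul_assoc]; exact mul_le_mul_of_nonneg_left hδf (pow_nonneg hr₀ n)
    _ ≤ ∑ j ∈ Finset.Icc 1 n, r ^ j * (P ^ j *ᵥ f) z := by
      rw [Finset.mul_sum]
      exact Finset.sum_le_sum fun j hj => mul_le_mul_of_nonneg_right
        (pow_le_pow_of_le_one hr₀ hr₁ (Finset.mem_Icc.1 hj).2)
        (pow_mulVec_nonneg hP hf j z)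
    _ = ∑ j ∈ Finset.Icc 1 n, ((r • P) ^ j *ᵥ f) z := by
      simp only [smul_pow, smul_mulVec, Pi.smul_apply, smul_eq_mul]

abbrev withNextState {Ω X : Type*} {m0 : MeasurableSpace Ω} [MeasurableSpace X]
    (ℱ : Filtration ℕ m0) (x : ℕ → Ω → X) (t : ℕ) : MeasurableSpace Ω :=
  ℱ t ⊔ MeasurableSpace.comap (x (t + 1)) inferInstance

theorem measurable_withNextState {Ω X : Type*} {m0 : MeasurableSpace Ω} [MeasurableSpace X]
    (ℱ : Filtration ℕ m0) (x : ℕ → Ω → X) (t : ℕ) :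
    Measurable[withNextState ℱ x t] (x (t + 1)) :=
  Measurable.of_comap_le le_sup_right

structure IsControlledChain {Ω X A : Type*} [DecidableEq X] [DecidableEq A]
    [MeasurableSpace X] [MeasurableSpace A] {m0 : MeasurableSpace Ω} (μ : Measure Ω)
    (ℱ : Filtration ℕ m0) (q : X → A → X → ℝ) (π : ℕ → A → Ω → ℝ) (x : ℕ → Ω → X)
    (a : ℕ → Ω → A) : Prop where
  measurable_state : ∀ t, Measurable[ℱ t] (x t)
  measurable_action : ∀ t, Measurable[ℱ t] (a t)
  condExp_state : ∀ t y,
    μ[fun ω => if x (t + 1) ω = y then 1 else 0 | ℱ t] =ᵐ[μ] fun ω => q (x t ω) (a t ω) y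
  condExp_action : ∀ t b,
    μ[fun ω => if a (t + 1) ω = b then 1 else 0 | withNextState ℱ x t] =ᵐ[μ] π (t + 1) b

namespace IsControlledChain

variable {Ω X A : Type*} [DecidableEq X] [DecidableEq A] [MeasurableSpace X]
  [MeasurableSpace A] {m0 : MeasurableSpace Ω} {μ : Measure Ω} {ℱ : Filtration ℕ m0}
  {q : X → A → X → ℝ} {π : ℕ → A → Ω → ℝ} {x : ℕ → Ω → X} {a : ℕ → Ω → A}

theorem measurable_state' (hP : IsControlledChain μ ℱ q π x a) (t : ℕ) : Measurable (x t) :=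
  (hP.measurable_state t).mono (ℱ.le t) le_rfl

theorem measurable_action' (hP : IsControlledChain μ ℱ q π x a) (t : ℕ) : Measurable (a t) :=
  (hP.measurable_action t).mono (ℱ.le t) le_rfl

theorem withNextState_le (hP : IsControlledChain μ ℱ q π x a) (t : ℕ) :
    withNextState ℱ x t ≤ m0 :=
  sup_le (ℱ.le t) (hP.measurable_state' (t + 1)).comap_le

theorem withNextState_le_succ (hP : IsControlledChain μ ℱ q π x a) (t : ℕ) :
    withNextState ℱ x t ≤ ℱ (t + 1) :=
  sup_le (ℱ.mono t.le_succ) (hP.measurable_state (t + 1)).comap_le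

variable [Fintype X] [MeasurableSingletonClass X] [IsFiniteMeasure μ]

theorem condExp_next_state (hP : IsControlledChain μ ℱ q π x a) (t : ℕ) (g : X → ℝ) :
    μ[fun ω => g (x (t + 1) ω) | ℱ t] =ᵐ[μ] fun ω => ∑ y, g y * q (x t ω) (a t ω) y :=
  condExp_comp_eq_sum_mul (ℱ.le t) (hP.measurable_state' (t + 1)) (hP.measurable_state t)
    (hP.condExp_state t) fun _ y => g y

theorem pow_mulVec_le_condExp (hP : IsControlledChain μ ℱ q π x a) {Q : Matrix X X ℝ}
    (hQ : ∀ i j, 0 ≤ Q i j)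
    (hstep : ∀ t (g : X → ℝ), 0 ≤ g → (fun ω => (Q *ᵥ g) (x (t + 1) ω))
      ≤ᵐ[μ] μ[fun ω => g (x (t + 2) ω) | withNextState ℱ x t])
    {g : X → ℝ} (hg : 0 ≤ g) (j t : ℕ) :
    (fun ω => (Q ^ j *ᵥ g) (x (t + 1) ω))
      ≤ᵐ[μ] μ[fun ω => g (x (t + 1 + j) ω) | withNextState ℱ x t] := by
  induction j generalizing t with
  | zero =>
    simp only [pow_zero, one_mulVec, add_zero]
    exact (EventuallyEq.of_eq (condExp_of_stronglyMeasurable (hP.withNextState_le t)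
      ((measurable_of_finite g).comp (measurable_withNextState ℱ x t)).stronglyMeasurable
      (integrable_comp_of_finite (hP.measurable_state' (t + 1)) g)).symm).le
  | succ j ih =>
    calc (fun ω => (Q ^ (j + 1) *ᵥ g) (x (t + 1) ω))
        = fun ω => (Q *ᵥ (Q ^ j *ᵥ g)) (x (t + 1) ω) := by rw [pow_succ', ← mulVec_mulVec]
      _ ≤ᵐ[μ] μ[fun ω => (Q ^ j *ᵥ g) (x (t + 2) ω) | withNextState ℱ x t] :=
        hstep t _ (pow_mulVec_nonneg hQ hg j)
      _ ≤ᵐ[μ] μ[fun ω => g (x (t + 1 + (j + 1)) ω) | withNextState ℱ x t] := by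
        rw [show t + 1 + (j + 1) = t + 1 + 1 + j by omega]
        exact condExp_mono_of_le_condExp ((hP.withNextState_le_succ t).trans le_sup_left)
          (hP.withNextState_le (t + 1)) (integrable_comp_of_finite (hP.measurable_state' _) _)
          (ih (t + 1))

theorem sum_pow_mulVec_mul_le_condExp (hP : IsControlledChain μ ℱ q π x a)
    {Q : Matrix X X ℝ} (hQ : ∀ i j, 0 ≤ Q i j)
    (hstep : ∀ t (g : X → ℝ), 0 ≤ g → (fun ω => (Q *ᵥ g) (x (t + 1) ω))
      ≤ᵐ[μ] μ[fun ω => g (x (t + 2) ω) | withNextState ℱ x t])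
    {g : X → ℝ} (hg : 0 ≤ g) (j t : ℕ) :
    (fun ω => ∑ z, (Q ^ j *ᵥ g) z * q (x t ω) (a t ω) z)
      ≤ᵐ[μ] μ[fun ω => g (x (t + j + 1) ω) | ℱ t] := calc
  _ =ᵐ[μ] μ[fun ω => (Q ^ j *ᵥ g) (x (t + 1) ω) | ℱ t] :=
    (hP.condExp_next_state t _).symm
  _ ≤ᵐ[μ] μ[fun ω => g (x (t + 1 + j) ω) | ℱ t] :=
    condExp_mono_of_le_condExp le_sup_left (hP.withNextState_le t)
      (integrable_comp_of_finite (hP.measurable_state' _) _)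
      (hP.pow_mulVec_le_condExp hQ hstep hg j t)
  _ = μ[fun ω => g (x (t + j + 1) ω) | ℱ t] := by rw [Nat.add_right_comm]

variable [Fintype A] [MeasurableSingletonClass A]

theorem condExp_next_action (hP : IsControlledChain μ ℱ q π x a) (t : ℕ) (h : X → A → ℝ) :
    μ[fun ω => h (x (t + 1) ω) (a (t + 1) ω) | withNextState ℱ x t]
      =ᵐ[μ] fun ω => ∑ b, h (x (t + 1) ω) b * π (t + 1) b ω :=
  condExp_comp_eq_sum_mul (hP.withNextState_le t) (hP.measurable_action' (t + 1))
    (measurable_withNextState ℱ x t) (hP.condExp_action t) h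

theorem mul_card_le_one [NeZero μ] (hP : IsControlledChain μ ℱ q π x a) {c : ℝ}
    (hπc : ∀ t b ω, c ≤ π t b ω) : c * Fintype.card A ≤ 1 := by
  have hsum : (fun _ => (1 : ℝ)) =ᵐ[μ] fun ω => ∑ b, π 1 b ω := by
    have h := hP.condExp_next_action 0 fun _ _ => 1
    simp only [one_mul] at h
    rwa [condExp_const (hP.withNextState_le 0)] at h
  obtain ⟨ω, hω⟩ := hsum.exists
  calc c * Fintype.card A = ∑ _b : A, c := by simp [mul_comm]
    _ ≤ ∑ b, π 1 b ω := Finset.sum_le_sum fun b _ => hπc 1 b ω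
    _ = 1 := hω.symm

theorem mul_card_smul_mulVec_le_condExp (hP : IsControlledChain μ ℱ q π x a)
    (hq : ∀ x a y, 0 ≤ q x a y) {c : ℝ} (hπc : ∀ t b ω, c ≤ π t b ω) {P : Matrix X X ℝ}
    (hPq : ∀ x' y, P x' y = (∑ b, q x' b y) / Fintype.card A) {g : X → ℝ} (hg : 0 ≤ g)
    (t : ℕ) :
    (fun ω => (((c * Fintype.card A) • P) *ᵥ g) (x (t + 1) ω))
      ≤ᵐ[μ] μ[fun ω => g (x (t + 2) ω) | withNextState ℱ x t] := by
  have hcard : ∀ z y, (Fintype.card A : ℝ) * P z y = ∑ b, q z b y := fun z y => by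
    -- `card A = 0` only when `A` is empty, where both sides vanish despite the division by zero
    rw [hPq]
    refine mul_div_cancel_of_imp' fun h => ?_
    have : IsEmpty A := Fintype.card_eq_zero_iff.1 (by exact_mod_cast h)
    simp
  have hpoint : ∀ z (w : A → ℝ), (∀ b, c ≤ w b) →
      (((c * Fintype.card A) • P) *ᵥ g) z ≤ ∑ b, (∑ y, g y * q z b y) * w b := by
    intro z w hw
    calc (((c * Fintype.card A) • P) *ᵥ g) z = ∑ b, c * ∑ y, g y * q z b y := by
          rw [smul_mulVec, Pi.smul_apply, smul_eq_mul, ← Finset.mul_sum, Finset.sum_comm,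
            mul_assoc, mulVec, dotProduct, Finset.mul_sum]
          refine congrArg (c * ·) (Finset.sum_congr rfl fun y _ => ?_)
          rw [← Finset.mul_sum, ← hcard]
          ring
      _ ≤ ∑ b, (∑ y, g y * q z b y) * w b := Finset.sum_le_sum fun b _ => by
          rw [mul_comm]
          exact mul_le_mul_of_nonneg_left (hw b)
            (Finset.sum_nonneg fun y _ => mul_nonneg (hg y) (hq z b y))
  calc (fun ω => (((c * Fintype.card A) • P) *ᵥ g) (x (t + 1) ω))
      ≤ᵐ[μ] fun ω => ∑ b, (∑ y, g y * q (x (t + 1) ω) b y) * π (t + 1) b ω :=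
        .of_forall fun ω => hpoint _ _ fun b => hπc _ b ω
    _ =ᵐ[μ] μ[fun ω => ∑ y, g y * q (x (t + 1) ω) (a (t + 1) ω) y
        | withNextState ℱ x t] :=
        (hP.condExp_next_action t fun z b => ∑ y, g y * q z b y).symm
    _ =ᵐ[μ] μ[μ[fun ω => g (x (t + 2) ω) | ℱ (t + 1)] | withNextState ℱ x t] :=
        condExp_congr_ae (hP.condExp_next_state (t + 1) g).symm
    _ =ᵐ[μ] μ[fun ω => g (x (t + 2) ω) | withNextState ℱ x t] :=
        condExp_condExp_of_le (hP.withNextState_le_succ t) (ℱ.le _)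

end IsControlledChain

theorem stmt_6_general {X A : Type*} [Fintype X] [Fintype A]
    [DecidableEq X] [DecidableEq A]
    [MeasurableSpace X] [MeasurableSingletonClass X]
    [MeasurableSpace A] [MeasurableSingletonClass A]
    {Ω : Type*} {m0 : MeasurableSpace Ω} (μ : Measure Ω) [IsProbabilityMeasure μ]
    (ℱ : Filtration ℕ m0)
    (q : X → A → X → ℝ)
    (hqnn : ∀ x a y, 0 ≤ q x a y) (hq1 : ∀ x a, ∑ y, q x a y = 1)
    (x : ℕ → Ω → X) (a : ℕ → Ω → A)
    (hx : ∀ t, Measurable[ℱ t] (x t)) (ha : ∀ t, Measurable[ℱ t] (a t))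
    -- transition law: P(x_{t+1} = y | ℱ_t) = q(y | x_t, a_t)
    (hkernel : ∀ t (y : X),
      μ[(fun ω => if x (t+1) ω = y then (1:ℝ) else 0) | ℱ t]
        =ᵐ[μ] fun ω => q (x t ω) (a t ω) y)
    -- learning strategy with persistent exploration: P(a_t = b | ℱ_{t-1}, x_t) = π_t(b) ≥ c
    (π : ℕ → A → Ω → ℝ) (c : ℝ) (hc : 0 < c)
    (hπc : ∀ t b ω, c ≤ π t b ω)
    (hπ : ∀ t (b : A), 1 ≤ t →
      μ[(fun ω => if a t ω = b then (1:ℝ) else 0)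
          | (ℱ (t-1)) ⊔ MeasurableSpace.comap (x t) inferInstance]
        =ᵐ[μ] π t b)
    -- constants for the uniform-strategy chain P(ḡ)
    (Pg : Matrix X X ℝ)
    (hPg : ∀ x' y, Pg x' y = (∑ b, q x' b y) / (Fintype.card A))
    (n : ℕ) (δ : ℝ)
    (hirr : ∀ x' y, δ ≤ ∑ j ∈ Finset.Icc 1 n, (Pg ^ j) x' y) :
    ∀ (f : X → ℝ), (∀ y, 0 ≤ f y) → ∀ t,
      ∀ᵐ ω ∂μ, c ^ n * (Fintype.card A : ℝ) ^ n * δ * ∑ y, f y ≤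
        ∑ j ∈ Finset.Icc 1 n, (μ[(fun ω' => f (x (t+j+1) ω')) | ℱ t]) ω := by
  intro f hf t
  have hP : IsControlledChain μ ℱ q π x a :=
    ⟨hx, ha, hkernel, fun s b => by simpa using hπ (s + 1) b (Nat.le_add_left 1 s)⟩
  set r := c * (Fintype.card A : ℝ)
  have hPg_nonneg : ∀ i j, 0 ≤ Pg i j := fun i j => by
    rw [hPg]; exact div_nonneg (Finset.sum_nonneg fun b _ => hqnn i b j) (Nat.cast_nonneg _)
  have hr : 0 ≤ r := mul_nonneg hc.le (Nat.cast_nonneg _)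
  have hQ : ∀ i j, 0 ≤ (r • Pg) i j := fun i j => mul_nonneg hr (hPg_nonneg i j)
  filter_upwards [ae_all_iff.2 fun j => hP.sum_pow_mulVec_mul_le_condExp hQ
    (fun s g hg => hP.mul_card_smul_mulVec_le_condExp hqnn hπc hPg hg s) hf j t] with ω hω
  have hr1 : r ≤ 1 := hP.mul_card_le_one hπc
  calc c ^ n * (Fintype.card A : ℝ) ^ n * δ * ∑ y, f y
      = ∑ z, r ^ n * δ * (∑ y, f y) * q (x t ω) (a t ω) z := by
        rw [← Finset.mul_sum, hq1, mul_one, mul_pow]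
    _ ≤ ∑ z, (∑ j ∈ Finset.Icc 1 n, ((r • Pg) ^ j *ᵥ f) z) * q (x t ω) (a t ω) z :=
        Finset.sum_le_sum fun z _ => mul_le_mul_of_nonneg_right
          (pow_mul_mul_sum_le_sum_smul_pow_mulVec hPg_nonneg hirr hr hr1 hf z) (hqnn _ _ z)
    _ = ∑ j ∈ Finset.Icc 1 n, ∑ z, ((r • Pg) ^ j *ᵥ f) z * q (x t ω) (a t ω) z := by
        simp only [Finset.sum_mul]; exact Finset.sum_comm
    _ ≤ _ := Finset.sum_le_sum fun j _ => hω j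

/-- One-step lower bound (Lemma 1): under persistent exploration `π_t(a) ≥ c`
and irreducibility of the uniform-strategy chain (constants `n, δ`), for every
nonnegative `f : X → ℝ` and every `t`,
`∑_{j=1}^n E[f(x_{t+j+1}) | ℱ_t] ≥ cⁿ |A|ⁿ δ ∑_y f(y)` a.s. -/
theorem stmt_6 {X A : Type*} [Fintype X] [Fintype A] [Nonempty X] [Nonempty A]
    [DecidableEq X] [DecidableEq A]
    [MeasurableSpace X] [MeasurableSingletonClass X]
    [MeasurableSpace A] [MeasurableSingletonClass A]
    {Ω : Type*} {m0 : MeasurableSpace Ω} (μ : Measure Ω) [IsProbabilityMeasure μ]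
    (ℱ : Filtration ℕ m0)
    (q : X → A → X → ℝ)
    (hqnn : ∀ x a y, 0 ≤ q x a y) (hq1 : ∀ x a, ∑ y, q x a y = 1)
    (x : ℕ → Ω → X) (a : ℕ → Ω → A)
    (hx : ∀ t, Measurable[ℱ t] (x t)) (ha : ∀ t, Measurable[ℱ t] (a t))
    -- transition law: P(x_{t+1} = y | ℱ_t) = q(y | x_t, a_t)
    (hkernel : ∀ t (y : X),
      μ[(fun ω => if x (t+1) ω = y then (1:ℝ) else 0) | ℱ t]
        =ᵐ[μ] fun ω => q (x t ω) (a t ω) y)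
    -- learning strategy with persistent exploration: P(a_t = b | ℱ_{t-1}, x_t) = π_t(b) ≥ c
    (π : ℕ → A → Ω → ℝ) (c : ℝ) (hc : 0 < c)
    (hπc : ∀ t b ω, c ≤ π t b ω)
    (hπ : ∀ t (b : A), 1 ≤ t →
      μ[(fun ω => if a t ω = b then (1:ℝ) else 0)
          | (ℱ (t-1)) ⊔ MeasurableSpace.comap (x t) inferInstance]
        =ᵐ[μ] π t b)
    -- constants for the uniform-strategy chain P(ḡ)
    (Pg : Matrix X X ℝ)
    (hPg : ∀ x' y, Pg x' y = (∑ b, q x' b y) / (Fintype.card A))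
    (n : ℕ) (hn : 1 ≤ n) (δ : ℝ) (hδ : 0 < δ)
    (hirr : ∀ x' y, δ ≤ ∑ j ∈ Finset.Icc 1 n, (Pg ^ j) x' y) :
    ∀ (f : X → ℝ), (∀ y, 0 ≤ f y) → ∀ t,
      ∀ᵐ ω ∂μ, c ^ n * (Fintype.card A : ℝ) ^ n * δ * ∑ y, f y ≤
        ∑ j ∈ Finset.Icc 1 n, (μ[(fun ω' => f (x (t+j+1) ω')) | ℱ t]) ω :=
  stmt_6_general μ ℱ q hqnn hq1 x a hx ha hkernel π c hc hπc hπ Pg hPg n δ hirr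
end

section
/- Suppose every state is visited infinitely often a.s., the learning strategy satisfies π_t(a) ≥ c(N_t(x_t)) > 0 for a function c : ℕ → (0,∞), the learning rate is α_t = 1/φ(N_t(x_t)), and ∑_{t≥1} c(t)/φ(t) = ∞ and ∑_{t≥1} 1/φ(t)² < ∞. Then for every (x,a), ∑_t α_t 1{x_t=x, a_t=a} = ∞ and ∑_t α_t² 1{x_t=x, a_t=a} < ∞ almost surely. -/
/-!
Along the visits to `x0` the local clock `N_t(x0)` runs through `1, 2, 3, …`, so reindexing by
visits turns `∑ α_t² 1{x_t = x0}` into `∑_j 1/φ(j)²` and bounds `∑ α_t π_t(a0) 1{x_t = x0}`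
below by `∑_j c(j)/φ(j)`, up to the term `t = 0`. The weight `α_t 1{x_t = x0}` is measurable for
`ℱ_{t-1} ∨ σ(x_t)`, the σ-algebra given which `a_t = a0` has probability `π_t(a0)`, so Lévy's
conditional Borel–Cantelli lemma, for the bounded nonnegative increments
`α_t 1{x_t = x0, a_t = a0}`, transfers the divergence of the second sum to their sum.
-/

open MeasureTheory Filter Finset

namespace Nat

variable {M : Type*} (p : ℕ → Prop) [DecidablePred p]

theorem sum_range_ite_count_succ [AddCommMonoid M] (F : ℕ → M) (T : ℕ) :
    ∑ t ∈ range T, (if p t then F (count p (t + 1)) else 0)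
      = ∑ j ∈ range (count p T), F (j + 1) := by
  induction T with
  | zero => simp
  | succ T ih =>
    rw [sum_range_succ, ih, count_succ]
    by_cases h : p T <;> simp [h, sum_range_succ]

variable {p}

theorem summable_ite_count_succ {g : ℕ → ℝ} (hg0 : ∀ j, 0 ≤ g j)
    (hg : Summable fun j => g (j + 1)) :
    Summable fun t => if p t then g (count p (t + 1)) else 0 := by
  refine summable_of_sum_range_le (c := ∑' j, g (j + 1))
    (fun t => by split_ifs <;> simp [hg0]) fun T => ?_
  rw [sum_range_ite_count_succ]
  exact hg.sum_le_tsum _ fun j _ => hg0 _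

theorem tendsto_sum_ite_count_succ_atTop (hp : Tendsto (count p) atTop atTop) {g : ℕ → ℝ}
    (hg0 : ∀ j, 0 ≤ g j) (hg : ¬Summable fun j => g (j + 1)) :
    Tendsto (fun T => ∑ t ∈ range T, if p t then g (count p (t + 1)) else 0) atTop atTop := by
  simp_rw [sum_range_ite_count_succ]
  exact ((not_summable_iff_tendsto_nat_atTop_of_nonneg fun j => hg0 _).mp hg).comp hp

end Nat

theorem tendsto_sum_range_atTop_of_le_succ {f g : ℕ → ℝ}
    (hfg : ∀ k, f (k + 1) ≤ g (k + 1)) (hf : Tendsto (fun n => ∑ k ∈ range n, f k) atTop atTop) :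
    Tendsto (fun n => ∑ k ∈ range n, g k) atTop atTop := by
  have hle : ∀ n, ∑ k ∈ range n, f k + -|f 0 - g 0| ≤ ∑ k ∈ range n, g k := by
    intro n
    rcases n with _ | n
    · simp
    rw [sum_range_succ', sum_range_succ']
    have := sum_le_sum fun k (_ : k ∈ range n) => hfg k
    have := le_abs_self (f 0 - g 0)
    linarith
  exact tendsto_atTop_mono hle (tendsto_atTop_add_const_right _ _ hf)

theorem le_tsum_sq_add_one {u : ℕ → ℝ} (hu : Summable fun j => u j ^ 2) (j : ℕ) :
    u j ≤ ∑' i, u i ^ 2 + 1 := by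
  nlinarith [hu.le_tsum j fun i _ => sq_nonneg (u i), sq_nonneg (u j - 1)]

namespace MeasureTheory

variable {Ω : Type*} {m0 : MeasurableSpace Ω} {μ : Measure Ω} [IsFiniteMeasure μ]

theorem integrable_of_nonneg_of_le {m : MeasurableSpace Ω} (hm : m ≤ m0) {f : Ω → ℝ} {C : ℝ}
    (hf : StronglyMeasurable[m] f) (hf0 : ∀ ω, 0 ≤ f ω) (hfC : ∀ ω, f ω ≤ C) :
    Integrable f μ :=
  .of_bound (hf.mono hm).aestronglyMeasurable C
    (.of_forall fun ω => by simpa [abs_of_nonneg (hf0 ω)] using hfC ω)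

variable {𝒢 : Filtration ℕ m0}

theorem ae_tendsto_sum_atTop_iff_sum_condExp {Y : ℕ → Ω → ℝ} {R : ℝ}
    (hY : ∀ n, StronglyMeasurable[𝒢 (n + 1)] (Y n)) (hY0 : ∀ n ω, 0 ≤ Y n ω)
    (hYR : ∀ n ω, Y n ω ≤ R) :
    ∀ᵐ ω ∂μ, Tendsto (fun n => ∑ k ∈ range n, Y k ω) atTop atTop ↔
      Tendsto (fun n => ∑ k ∈ range n, μ[Y k | 𝒢 k] ω) atTop atTop := by
  set f : ℕ → Ω → ℝ := fun n ω => ∑ k ∈ range n, Y k ω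
  have hf_succ : ∀ n, f (n + 1) - f n = Y n := fun n => funext fun ω => sum_range_succ_sub_sum _
  have hf_adapted : StronglyAdapted 𝒢 f := fun n =>
    Finset.stronglyMeasurable_fun_sum _ fun k hk => (hY k).mono (𝒢.mono (mem_range.mp hk))
  have hf_int : ∀ n, Integrable (f n) μ := fun n => integrable_finsetSum _ fun k _ =>
    integrable_of_nonneg_of_le (𝒢.le _) (hY k) (hY0 k) (hYR k)
  have h := tendsto_sum_indicator_atTop_iff (μ := μ) (R := R.toNNReal)
    (.of_forall fun ω n => by rw [← sub_nonneg, ← Pi.sub_apply, hf_succ]; exact hY0 n ω)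
    hf_adapted hf_int (.of_forall fun ω n => by
      rw [← Pi.sub_apply, hf_succ, abs_of_nonneg (hY0 n ω)]
      exact (hYR n ω).trans R.le_coe_toNNReal)
  simpa [predictablePart, hf_succ, f] using h

theorem ae_tendsto_sum_mul_atTop_of_tendsto_sum_mul_condExp {w I : ℕ → Ω → ℝ} {R : ℝ}
    (hw : ∀ n, StronglyMeasurable[𝒢 n] (w n)) (hI : ∀ n, StronglyMeasurable[𝒢 (n + 1)] (I n))
    (hw0 : ∀ n ω, 0 ≤ w n ω) (hwR : ∀ n ω, w n ω ≤ R) (hI0 : ∀ n ω, 0 ≤ I n ω)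
    (hI1 : ∀ n ω, I n ω ≤ 1) :
    ∀ᵐ ω ∂μ, Tendsto (fun n => ∑ k ∈ range n, w k ω * μ[I k | 𝒢 k] ω) atTop atTop →
      Tendsto (fun n => ∑ k ∈ range n, w k ω * I k ω) atTop atTop := by
  have hwI_le : ∀ n ω, w n ω * I n ω ≤ R := fun n ω =>
    (mul_le_of_le_one_right (hw0 n ω) (hI1 n ω)).trans (hwR n ω)
  have hwI_meas : ∀ n, StronglyMeasurable[𝒢 (n + 1)] (w n * I n) := fun n =>
    ((hw n).mono (𝒢.mono n.le_succ)).mul (hI n)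
  have hwI0 : ∀ n ω, 0 ≤ w n ω * I n ω := fun n ω => mul_nonneg (hw0 n ω) (hI0 n ω)
  have hpull : ∀ᵐ ω ∂μ, ∀ n, μ[w n * I n | 𝒢 n] ω = w n ω * μ[I n | 𝒢 n] ω :=
    ae_all_iff.2 fun n => condExp_mul_of_stronglyMeasurable_left (hw n)
      (integrable_of_nonneg_of_le (𝒢.le _) (hwI_meas n) (hwI0 n) (hwI_le n))
      (integrable_of_nonneg_of_le (𝒢.le _) (hI n) (hI0 n) (hI1 n))
  filter_upwards [ae_tendsto_sum_atTop_iff_sum_condExp (μ := μ) hwI_meas hwI0 hwI_le, hpull]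
    with ω hiff hpull
  simpa [hpull] using hiff.2

end MeasureTheory

namespace MeasureTheory.Filtration

variable {Ω X : Type*} {m0 : MeasurableSpace Ω} [MeasurableSpace X]

/-- `ℱ_{n-1} ∨ σ(x_n)`, the information at hand when the action `a_n` is chosen
(at `n = 0`, `ℱ 0 ∨ σ(x 0)` by truncated subtraction). -/
def predSupComap (ℱ : Filtration ℕ m0) (x : ℕ → Ω → X) (hx : ∀ n, Measurable[ℱ n] (x n)) :
    Filtration ℕ m0 where
  seq n := ℱ (n - 1) ⊔ MeasurableSpace.comap (x n) inferInstance
  mono' := monotone_nat_of_le_succ fun n =>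
    le_sup_of_le_left (sup_le (ℱ.mono (by omega)) ((hx n).comap_le.trans (ℱ.mono (by omega))))
  le' n := sup_le (ℱ.le _) ((hx n).comap_le.trans (ℱ.le n))

variable {ℱ : Filtration ℕ m0} {x : ℕ → Ω → X} {hx : ∀ n, Measurable[ℱ n] (x n)}

theorem predSupComap_apply (n : ℕ) :
    ℱ.predSupComap x hx n = ℱ (n - 1) ⊔ MeasurableSpace.comap (x n) inferInstance := rfl

theorem le_predSupComap_succ (n : ℕ) : ℱ n ≤ ℱ.predSupComap x hx (n + 1) := by
  rw [predSupComap_apply, Nat.add_sub_cancel]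
  exact le_sup_left

theorem measurable_predSupComap {k n : ℕ} (hkn : k ≤ n) :
    Measurable[ℱ.predSupComap x hx n] (x k) := by
  rw [predSupComap_apply]
  rcases hkn.lt_or_eq with hlt | rfl
  · exact (hx k).mono ((ℱ.mono (by omega)).trans le_sup_left) le_rfl
  · exact Measurable.of_comap_le le_sup_right

end MeasureTheory.Filtration

theorem measurable_count_eq {Ω X : Type*} {m : MeasurableSpace Ω} [MeasurableSpace X]
    [MeasurableSingletonClass X] [DecidableEq X] {x : ℕ → Ω → X} {n : ℕ}
    (hx : ∀ k < n, Measurable[m] (x k)) (x0 : X) :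
    Measurable[m] fun ω => Nat.count (fun k => x k ω = x0) n := by
  simp only [Nat.count_eq_card_filter_range, card_filter]
  exact Finset.measurable_fun_sum _ fun k hk =>
    Measurable.ite (hx k (mem_range.mp hk) (measurableSet_singleton x0)) measurable_const
      measurable_const

section VisitWeight

variable {Ω X : Type*} [DecidableEq X]

/-- `ψ(N_t(x0)) 1{x_t = x0}`, with the local clock `N_t(x0)` written as a `Nat.count`. -/
def visitWeight (x : ℕ → Ω → X) (x0 : X) (ψ : ℕ → ℝ) (t : ℕ) (ω : Ω) : ℝ :=
  if x t ω = x0 then ψ (Nat.count (fun k => x k ω = x0) (t + 1)) else 0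

variable {x : ℕ → Ω → X} {x0 : X} {ψ : ℕ → ℝ} {t : ℕ} {ω : Ω}

theorem visitWeight_nonneg (hψ : ∀ j, 0 ≤ ψ j) : 0 ≤ visitWeight x x0 ψ t ω := by
  unfold visitWeight
  split_ifs
  exacts [hψ _, le_rfl]

theorem visitWeight_le {R : ℝ} (hR : 0 ≤ R) (hψ : ∀ j, ψ (j + 1) ≤ R) :
    visitWeight x x0 ψ t ω ≤ R := by
  unfold visitWeight
  split_ifs with h
  · simpa [Nat.count_succ, h] using hψ _
  · exact hR

theorem stronglyMeasurable_visitWeight [MeasurableSpace X] [MeasurableSingletonClass X]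
    {m0 : MeasurableSpace Ω} {ℱ : Filtration ℕ m0} (hx : ∀ n, Measurable[ℱ n] (x n)) :
    StronglyMeasurable[ℱ.predSupComap x hx t] (visitWeight x x0 ψ t) := by
  refine Measurable.stronglyMeasurable (Measurable.ite ?_ ?_ measurable_const)
  · exact Filtration.measurable_predSupComap le_rfl (measurableSet_singleton x0)
  · exact (measurable_from_top (f := ψ)).comp (measurable_count_eq (n := t + 1)
      (fun k hk => Filtration.measurable_predSupComap (k := k) (n := t) (by omega)) x0)

theorem visitWeight_mul_le (hψ : ∀ j, 0 ≤ ψ j) {c : ℕ → ℝ} {y : ℝ}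
    (hc : x t ω = x0 → c (Nat.count (fun k => x k ω = x0) (t + 1)) ≤ y) :
    visitWeight x x0 (fun j => c j * ψ j) t ω ≤ visitWeight x x0 ψ t ω * y := by
  unfold visitWeight
  split_ifs with h
  · exact (mul_comm _ _).trans_le (mul_le_mul_of_nonneg_left (hc h) (hψ _))
  · simp

end VisitWeight

theorem stmt_12_general {X A : Type*}
    [DecidableEq X] [DecidableEq A]
    [MeasurableSpace X] [MeasurableSingletonClass X]
    [MeasurableSpace A] [MeasurableSingletonClass A]
    {Ω : Type*} {m0 : MeasurableSpace Ω} (μ : Measure Ω) [IsProbabilityMeasure μ]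
    (ℱ : Filtration ℕ m0)
    (x : ℕ → Ω → X) (a : ℕ → Ω → A)
    (hx : ∀ t, Measurable[ℱ t] (x t)) (ha : ∀ t, Measurable[ℱ t] (a t))
    -- local clocks of all states
    (N : ℕ → X → Ω → ℕ)
    (hN : ∀ t x' ω, N t x' ω = ∑ k ∈ Finset.range (t + 1), if x k ω = x' then 1 else 0)
    -- every state is visited infinitely often a.s.
    (hio : ∀ x' : X, ∀ᵐ ω ∂μ, Filter.Tendsto (fun t => N t x' ω) atTop atTop)
    -- learning strategy with exploration bounded below by c(N_t(x_t))
    (π : ℕ → A → Ω → ℝ) (c : ℕ → ℝ) (hcpos : ∀ j, 0 < c j)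
    (hπc : ∀ t b ω, c (N t (x t ω) ω) ≤ π t b ω)
    (hπ : ∀ t (b : A), 1 ≤ t →
      μ[(fun ω => if a t ω = b then (1:ℝ) else 0)
          | (ℱ (t-1)) ⊔ MeasurableSpace.comap (x t) inferInstance]
        =ᵐ[μ] π t b)
    -- the learning rate α_t = 1/φ(N_t(x_t))
    (φ : ℕ → ℝ) (hφpos : ∀ t, 0 < φ t)
    (hdiv : ¬ Summable (fun t : ℕ => c (t + 1) / φ (t + 1)))
    (hsq : Summable (fun t : ℕ => (1 / φ (t + 1)) ^ 2))
    (α : ℕ → Ω → ℝ) (hα : ∀ t ω, α t ω = 1 / φ (N t (x t ω) ω)) :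
    ∀ (x0 : X) (a0 : A), ∀ᵐ ω ∂μ,
      Filter.Tendsto (fun T : ℕ => ∑ t ∈ Finset.range T,
        (if x t ω = x0 ∧ a t ω = a0 then α t ω else 0)) atTop atTop ∧
      Summable (fun t : ℕ =>
        (if x t ω = x0 ∧ a t ω = a0 then α t ω else 0) ^ 2) := by
  intro x0 a0
  have hcount : ∀ t ω, N t x0 ω = Nat.count (fun k => x k ω = x0) (t + 1) := fun t ω => by
    rw [hN, Nat.count_eq_card_filter_range, card_filter]
  set I : ℕ → Ω → ℝ := fun t ω => if a t ω = a0 then 1 else 0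
  have hγ : ∀ t ω, (if x t ω = x0 ∧ a t ω = a0 then α t ω else 0)
      = visitWeight x x0 (fun j => 1 / φ j) t ω * I t ω := fun t ω => by
    simp only [visitWeight, I, hα, ← hcount]
    split_ifs <;> simp_all
  have hφ_inv_nonneg : ∀ j, 0 ≤ 1 / φ j := fun j => (one_div_pos.2 (hφpos j)).le
  filter_upwards [hio x0, ae_tendsto_sum_mul_atTop_of_tendsto_sum_mul_condExp (μ := μ) (I := I)
    (fun t => stronglyMeasurable_visitWeight hx)
    (fun t => (Measurable.ite ((ha t).mono (Filtration.le_predSupComap_succ t) le_rfl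
      (measurableSet_singleton a0)) measurable_const measurable_const).stronglyMeasurable)
    (fun t ω => visitWeight_nonneg hφ_inv_nonneg)
    (fun t ω => visitWeight_le (by positivity) (le_tsum_sq_add_one hsq))
    (fun _ _ => ite_nonneg zero_le_one le_rfl) (fun _ _ => ite_le_one le_rfl zero_le_one),
    ae_all_iff.2 fun t => hπ (t + 1) a0 le_add_self] with ω hvisit hBC hπω
  simp only [hcount] at hvisit
  simp only [hγ]
  refine ⟨hBC (tendsto_sum_range_atTop_of_le_succ (fun k => ?_)
    (Nat.tendsto_sum_ite_count_succ_atTop ((tendsto_add_atTop_iff_nat 1).1 hvisit)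
      (g := fun j => c j * (1 / φ j)) (fun j => mul_nonneg (hcpos j).le (hφ_inv_nonneg j))
      (by simpa only [mul_one_div] using hdiv))),
    .of_nonneg_of_le (fun t => sq_nonneg _) (fun t => ?_) (Nat.summable_ite_count_succ
      (p := fun k => x k ω = x0) (g := fun j => (1 / φ j) ^ 2) (fun j => sq_nonneg _) hsq)⟩
  · rw [show μ[I (k + 1) | ℱ.predSupComap x hx (k + 1)] ω = π (k + 1) a0 ω from hπω k]
    exact visitWeight_mul_le hφ_inv_nonneg fun h => by simpa [h, hcount] using hπc (k + 1) a0 ω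
  · simp only [visitWeight, I]
    split_ifs <;> simp [sq_nonneg]

/-- Decaying exploration consistent with the rate: if every state is visited
infinitely often a.s., the learning strategy satisfies
`π_t(a) ≥ c(N_t(x_t)) > 0`, the learning rate is `α_t = 1/φ(N_t(x_t))` and
`∑ c(t)/φ(t) = ∞`, `∑ 1/φ(t)² < ∞`, then the Robbins–Monro conditions hold
for `γ_t = α_t 1{x_t = x, a_t = a}` for every `(x,a)`, almost surely. -/
theorem stmt_12 {X A : Type*} [Fintype X] [Fintype A] [Nonempty X] [Nonempty A]
    [DecidableEq X] [DecidableEq A]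
    [MeasurableSpace X] [MeasurableSingletonClass X]
    [MeasurableSpace A] [MeasurableSingletonClass A]
    {Ω : Type*} {m0 : MeasurableSpace Ω} (μ : Measure Ω) [IsProbabilityMeasure μ]
    (ℱ : Filtration ℕ m0)
    (q : X → A → X → ℝ)
    (hqnn : ∀ x a y, 0 ≤ q x a y) (hq1 : ∀ x a, ∑ y, q x a y = 1)
    (x : ℕ → Ω → X) (a : ℕ → Ω → A)
    (hx : ∀ t, Measurable[ℱ t] (x t)) (ha : ∀ t, Measurable[ℱ t] (a t))
    (hkernel : ∀ t (y : X),
      μ[(fun ω => if x (t+1) ω = y then (1:ℝ) else 0) | ℱ t]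
        =ᵐ[μ] fun ω => q (x t ω) (a t ω) y)
    -- local clocks of all states
    (N : ℕ → X → Ω → ℕ)
    (hN : ∀ t x' ω, N t x' ω = ∑ k ∈ Finset.range (t + 1), if x k ω = x' then 1 else 0)
    -- every state is visited infinitely often a.s.
    (hio : ∀ x' : X, ∀ᵐ ω ∂μ, Filter.Tendsto (fun t => N t x' ω) atTop atTop)
    -- learning strategy with exploration bounded below by c(N_t(x_t))
    (π : ℕ → A → Ω → ℝ) (c : ℕ → ℝ) (hcpos : ∀ j, 0 < c j)
    (hπc : ∀ t b ω, c (N t (x t ω) ω) ≤ π t b ω)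
    (hπ : ∀ t (b : A), 1 ≤ t →
      μ[(fun ω => if a t ω = b then (1:ℝ) else 0)
          | (ℱ (t-1)) ⊔ MeasurableSpace.comap (x t) inferInstance]
        =ᵐ[μ] π t b)
    -- the learning rate α_t = 1/φ(N_t(x_t))
    (φ : ℕ → ℝ) (hφpos : ∀ t, 0 < φ t)
    (hdiv : ¬ Summable (fun t : ℕ => c (t + 1) / φ (t + 1)))
    (hsq : Summable (fun t : ℕ => (1 / φ (t + 1)) ^ 2))
    (α : ℕ → Ω → ℝ) (hα : ∀ t ω, α t ω = 1 / φ (N t (x t ω) ω)) :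
    ∀ (x0 : X) (a0 : A), ∀ᵐ ω ∂μ,
      Filter.Tendsto (fun T : ℕ => ∑ t ∈ Finset.range T,
        (if x t ω = x0 ∧ a t ω = a0 then α t ω else 0)) atTop atTop ∧
      Summable (fun t : ℕ =>
        (if x t ω = x0 ∧ a t ω = a0 then α t ω else 0) ^ 2) :=
  stmt_12_general μ ℱ x a hx ha N hN hio π c hcpos hπc hπ φ hφpos hdiv hsq α hα
end

section
/- Let X and A be finite, q a transition kernel. The MDP is communicating (for all x, y there is a deterministic stationary strategy g and n with Pⁿ(g)(x,y) > 0) if and only if P(g) is irreducible for every completely mixed stationary randomized strategy g. -/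
/-!
Only the support of the transition kernel matters: `Pᵐ(x, y) > 0` for some `m ≥ 1` iff `y` is
reachable from `x` in the graph of positive entries. A completely mixed strategy has an edge
`x → z` iff some action moves `x` to `z` with positive probability, so its graph contains that of
every deterministic strategy. Conversely, to reach `y` deterministically it suffices to play, in
every state `x ≠ y`, an action that moves to a state strictly closer to `y` in the graph where
`x → z` whenever some action moves `x` to `z`.
-/

open Finset Relation

namespace Relation

variable {α : Type*} {r : α → α → Prop}

lemma reflTransGen_iff_exists_iterate_comp {a b : α} :
    ReflTransGen r a b ↔ ∃ n, (Comp r)^[n] (· = ·) a b := by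
  constructor
  · intro h
    induction h using ReflTransGen.head_induction_on with
    | refl => exact ⟨0, rfl⟩
    | head hac _ ih =>
      obtain ⟨n, hn⟩ := ih
      exact ⟨n + 1, by rw [Function.iterate_succ_apply']; exact ⟨_, hac, hn⟩⟩
  · rintro ⟨n, hn⟩
    induction n generalizing a with
    | zero => exact hn ▸ ReflTransGen.refl
    | succ n ih =>
      rw [Function.iterate_succ_apply'] at hn
      obtain ⟨c, hac, hcb⟩ := hn
      exact ReflTransGen.head hac (ih hcb)

/-- The rank of `a` is the length of a shortest path from `a` to `b`. -/
lemma exists_rank_of_reflTransGen (b : α) :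
    ∃ d : α → ℕ, ∀ a, ReflTransGen r a b → a ≠ b →
      ∃ c, r a c ∧ ReflTransGen r c b ∧ d c < d a := by
  refine ⟨fun a => sInf {n | (Comp r)^[n] (· = ·) a b}, fun a hab hne => ?_⟩
  have hmem := Nat.sInf_mem (s := {n | (Comp r)^[n] (· = ·) a b})
    (reflTransGen_iff_exists_iterate_comp.1 hab)
  obtain ⟨k, hk⟩ : ∃ k, sInf {n | (Comp r)^[n] (· = ·) a b} = k + 1 :=
    Nat.exists_eq_succ_of_ne_zero fun h0 => hne (by rw [h0] at hmem; exact hmem)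
  rw [Set.mem_ofPred_eq, hk, Function.iterate_succ_apply'] at hmem
  obtain ⟨c, hac, hcb⟩ := hmem
  refine ⟨c, hac, reflTransGen_iff_exists_iterate_comp.2 ⟨k, hcb⟩, ?_⟩
  simp only [hk]
  exact Nat.lt_succ_of_le (Nat.sInf_le hcb)

end Relation

section Strategy

variable {X A : Type*} (step : X → A → X → Prop)

lemma exists_strategy_reflTransGen (y : X) (a₀ : A) :
    ∃ b : X → A, b y = a₀ ∧ ∀ x, ReflTransGen (fun x z => ∃ a, step x a z) x y →
      ReflTransGen (fun x z => step x (b x) z) x y := by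
  classical
  have : Nonempty A := ⟨a₀⟩
  obtain ⟨d, hd⟩ := exists_rank_of_reflTransGen (r := fun x z => ∃ a, step x a z) y
  choose! next hnext using hd
  choose! act hact using fun x hxy hne => (hnext x hxy hne).1
  refine ⟨Function.update act y a₀, by simp, fun x hx => ?_⟩
  induction hdx : d x using Nat.strong_induction_on generalizing x with
  | _ n ih =>
    by_cases hxy : x = y
    · exact hxy ▸ ReflTransGen.refl
    · obtain ⟨-, hnext_reach, hlt⟩ := hnext x hx hxy
      refine ReflTransGen.head ?_ (ih _ (hdx ▸ hlt) _ hnext_reach rfl)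
      simpa [Function.update_of_ne hxy] using hact x hx hxy

lemma exists_strategy_transGen {x y : X} (h : TransGen (fun x z => ∃ a, step x a z) x y) :
    ∃ b : X → A, TransGen (fun x z => step x (b x) z) x y := by
  obtain ⟨z, ⟨a₀, hxz⟩, hzy⟩ := TransGen.head'_iff.1 h
  obtain ⟨b, hby, hb⟩ := exists_strategy_reflTransGen step y a₀
  refine ⟨b, ?_⟩
  by_cases hxy : x = y
  · subst hxy
    exact TransGen.head' (hby ▸ hxz) (hb z hzy)
  · exact (reflTransGen_iff_eq_or_transGen.1 (hb x h.to_reflTransGen)).resolve_left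
      (Ne.symm hxy)

end Strategy

namespace Matrix

variable {n R : Type*} [Fintype n] [DecidableEq n] [Semiring R] [LinearOrder R]
  [IsStrictOrderedRing R] {M : Matrix n n R}

lemma pow_succ_apply_pos_iff (hM : ∀ i j, 0 ≤ M i j) (m : ℕ) (x y : n) :
    0 < (M ^ (m + 1)) x y ↔ ∃ z, 0 < (M ^ m) x z ∧ 0 < M z y := by
  rw [pow_succ, mul_apply, Finset.sum_pos_iff_of_nonneg
    fun z _ => mul_nonneg (pow_apply_nonneg hM m x z) (hM z y)]
  simp only [mem_univ, true_and]
  refine exists_congr fun z => ⟨fun h => ?_, fun h => mul_pos h.1 h.2⟩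
  exact ⟨pos_of_mul_pos_left h (hM z y), pos_of_mul_pos_right h (pow_apply_nonneg hM m x z)⟩

lemma exists_pow_apply_pos_iff_reflTransGen (hM : ∀ i j, 0 ≤ M i j) (x y : n) :
    (∃ m, 0 < (M ^ m) x y) ↔ ReflTransGen (fun i j => 0 < M i j) x y := by
  constructor
  · rintro ⟨m, hm⟩
    induction m generalizing y with
    | zero =>
      obtain rfl : x = y := by by_contra hxy; simp [one_apply_ne hxy] at hm
      exact ReflTransGen.refl
    | succ m ih =>
      obtain ⟨z, hxz, hzy⟩ := (pow_succ_apply_pos_iff hM m x y).1 hm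
      exact (ih z hxz).tail hzy
  · intro h
    induction h with
    | refl => exact ⟨0, by simp⟩
    | tail _ hzy ih =>
      obtain ⟨m, hm⟩ := ih
      exact ⟨m + 1, (pow_succ_apply_pos_iff hM m _ _).2 ⟨_, hm, hzy⟩⟩

lemma exists_pow_apply_pos_iff_transGen (hM : ∀ i j, 0 ≤ M i j) (x y : n) :
    (∃ m, 1 ≤ m ∧ 0 < (M ^ m) x y) ↔ TransGen (fun i j => 0 < M i j) x y := by
  rw [TransGen.tail'_iff]
  simp_rw [← exists_pow_apply_pos_iff_reflTransGen hM]
  constructor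
  · rintro ⟨_ | m, hm, hpos⟩
    · omega
    · obtain ⟨z, hxz, hzy⟩ := (pow_succ_apply_pos_iff hM m x y).1 hpos
      exact ⟨z, ⟨m, hxz⟩, hzy⟩
  · rintro ⟨z, ⟨m, hxz⟩, hzy⟩
    exact ⟨m + 1, by omega, (pow_succ_apply_pos_iff hM m x y).2 ⟨z, hxz, hzy⟩⟩

end Matrix

lemma Finset.sum_mul_pos_iff_exists_pos {ι R : Type*} [Fintype ι] [Semiring R] [LinearOrder R]
    [IsStrictOrderedRing R] {f w : ι → R} (hf : ∀ i, 0 ≤ f i) (hw : ∀ i, 0 < w i) :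
    0 < ∑ i, f i * w i ↔ ∃ i, 0 < f i := by
  rw [Finset.sum_pos_iff_of_nonneg fun i _ => mul_nonneg (hf i) (hw i).le]
  simp only [mem_univ, true_and, mul_pos_iff_of_pos_right (hw _)]

theorem stmt_13_general {X A : Type*} [Fintype X] [Fintype A] [Nonempty A]
    [DecidableEq X]
    (q : X → A → X → ℝ)
    (hqnn : ∀ x a y, 0 ≤ q x a y) :
    (∀ x y : X, ∃ b : X → A, ∃ m : ℕ, 1 ≤ m ∧
        0 < (((Matrix.of fun x' y' => q x' (b x') y') : Matrix X X ℝ) ^ m) x y) ↔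
    (∀ g : X → A → ℝ, (∀ x, ∑ a, g x a = 1) → (∀ x a, 0 < g x a) →
      ∀ x y : X, ∃ m : ℕ, 1 ≤ m ∧
        0 < (((Matrix.of fun x' y' => ∑ a, q x' a y' * g x' a) : Matrix X X ℝ) ^ m) x y) := by
  have hdet (b : X → A) (x y : X) := Matrix.exists_pow_apply_pos_iff_transGen
    (M := Matrix.of fun x' y' => q x' (b x') y') (fun x' y' => hqnn x' (b x') y') x y
  have hmixed (g : X → A → ℝ) (hg : ∀ x a, 0 < g x a) (x y : X) :
      (∃ m, 1 ≤ m ∧ 0 < ((Matrix.of fun x' y' => ∑ a, q x' a y' * g x' a) ^ m) x y) ↔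
        TransGen (fun x' y' => ∃ a, 0 < q x' a y') x y := by
    rw [Matrix.exists_pow_apply_pos_iff_transGen
      (M := Matrix.of fun x' y' => ∑ a, q x' a y' * g x' a)
      fun x' y' => sum_nonneg fun a _ => mul_nonneg (hqnn x' a y') (hg x' a).le]
    simp only [Matrix.of_apply, sum_mul_pos_iff_exists_pos (hqnn _ · _) (hg _)]
  constructor
  · intro h g _ hg x y
    obtain ⟨b, hb⟩ := h x y
    exact (hmixed g hg x y).2 (TransGen.mono (fun _ _ h => ⟨_, h⟩) x y ((hdet b x y).1 hb))
  · intro h x y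
    have hunif : ∀ (x : X) (a : A), 0 < (Fintype.card A : ℝ)⁻¹ := fun _ _ => by positivity
    have hsum : ∀ x : X, ∑ _a : A, (Fintype.card A : ℝ)⁻¹ = 1 := fun _ => by simp
    obtain ⟨b, hb⟩ := exists_strategy_transGen _ ((hmixed _ hunif x y).1 (h _ hsum hunif x y))
    exact ⟨b, (hdet b x y).2 hb⟩

/-- Filar–Schultz characterization: a finite MDP is communicating (for all
`x, y` there is a deterministic stationary strategy `b` and `m ≥ 1` with
`Pᵐ(b)(x,y) > 0`) iff `P(g)` is irreducible for every completely mixed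
stationary randomized strategy `g`. -/
theorem stmt_13 {X A : Type*} [Fintype X] [Fintype A] [Nonempty X] [Nonempty A]
    [DecidableEq X] [DecidableEq A]
    (q : X → A → X → ℝ)
    (hqnn : ∀ x a y, 0 ≤ q x a y) (hq1 : ∀ x a, ∑ y, q x a y = 1) :
    (∀ x y : X, ∃ b : X → A, ∃ m : ℕ, 1 ≤ m ∧
        0 < (((Matrix.of fun x' y' => q x' (b x') y') : Matrix X X ℝ) ^ m) x y) ↔
    (∀ g : X → A → ℝ, (∀ x, ∑ a, g x a = 1) → (∀ x a, 0 < g x a) →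
      ∀ x y : X, ∃ m : ℕ, 1 ≤ m ∧
        0 < (((Matrix.of fun x' y' => ∑ a, q x' a y' * g x' a) : Matrix X X ℝ) ^ m) x y) :=
  stmt_13_general q hqnn
end
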